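/- Let p ∈ (0,1), q ∈ [0,1]. For every x ∈ Σ₂ and every even n, ℙ_μ[x_1^n] = p^{N_{1,odd}} · (1−p)^{n/2 − N_{1,odd}} · (1−p)^{N_{00}} · p^{N_{01}} · q^{N_{10}} · (1−q)^{N_{11}}, where N_{1,odd} = #{k ≤ n : k odd, x_k = 1} and N_{ij} = N_{ij}(x_1^{n/2}) = #{k ≤ n/2 : x_k = i, x_{2k} = j} for i, j ∈ {0,1}. -/

import Mathlib

/-!
Every `k ≥ 1` is uniquely `2 ^ r * i` with `i` odd, so the progressions `J(i) ∩ [1, n]`, `i` odd,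
partition `[1, n]`, and the consecutive pairs `(k, 2k)` inside them are exactly those with
`k ≤ n / 2`. Hence `ℙ_μ[x_1^n]` is the product of the initial weights `π(x_i)` over odd `i ≤ n`
and of the transition weights `P(x_k, x_{2k})` over `k ≤ n / 2`; grouping equal factors gives
the powers.
-/

open Filter MeasureTheory Real Set

noncomputable section

/-- `Σ₂ = {0,1}^ℕ`: the space of 0-1 sequences `(x_k)_{k ≥ 1}`, where the entry `x_k`
(for `k ≥ 1`) is represented by `x (k-1) : Bool`. -/
abbrev Sigma2 : Type := ℕ → Bool

/-- The metric `ρ((x_k),(y_k)) = 2^{-min{n : x_n ≠ y_n}}` (up to the indexing convention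
`dist x y = (1/2)^{first index where x,y differ}`). -/
noncomputable instance : MetricSpace Sigma2 :=
  PiNat.metricSpaceOfDiscreteUniformity fun _ => rfl

/-- The digit `x_k ∈ {0,1}` (for `k ≥ 1`) of a sequence, as a real number. -/
def xval (x : Sigma2) (k : ℕ) : ℝ := if x (k - 1) then 1 else 0

/-- `A_θ = {(x_k) ∈ Σ₂ : lim_{n→∞} (1/n) ∑_{k=1}^n x_k x_{2k} = θ}`. -/
def Aset (θ : ℝ) : Set Sigma2 :=
  {x | Tendsto (fun n : ℕ => (∑ k ∈ Finset.Icc 1 n, xval x k * xval x (2 * k)) / (n : ℝ))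
    atTop (nhds θ)}

/-- The cylinder set `[u]` of sequences starting with the finite word `u`
(a list `u` represents the word `u_1 … u_n` with `u_k = u.getD (k-1) false`). -/
def cylinder (u : List Bool) : Set Sigma2 :=
  {x | ∀ i < u.length, x i = u.getD i false}

/-- Initial distribution: `π(0) = 1 - p`, `π(1) = p`. -/
def initProb (p : ℝ) (b : Bool) : ℝ := if b then p else 1 - p

/-- Transition probabilities: `P(0,0) = 1-p`, `P(0,1) = p`, `P(1,0) = q`, `P(1,1) = 1-q`. -/
def transProb (p q : ℝ) (a b : Bool) : ℝ :=
  if a then (if b then 1 - q else q) else (if b then p else 1 - p)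

/-- Markov weight `μ[w] = π(w_1) ∏_{j=1}^{m-1} P(w_j, w_{j+1})` of a finite word `w`. -/
def mweight (p q : ℝ) (w : List Bool) : ℝ :=
  if w = [] then 1
  else initProb p (w.getD 0 false) *
    ∏ j ∈ Finset.range (w.length - 1), transProb p q (w.getD j false) (w.getD (j + 1) false)

/-- The subword `u|_{J(i)} = (u_i, u_{2i}, u_{4i}, …)` of a finite word `u` along the
geometric progression `J(i) = {2^r i : r ≥ 0}`, keeping the indices `2^r i ≤ |u|`. -/
def subword (u : List Bool) (i : ℕ) : List Bool :=
  ((List.range (u.length + 1)).filter (fun r => 2 ^ r * i ≤ u.length)).map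
    (fun r => u.getD (2 ^ r * i - 1) false)

/-- `ℙ_μ[u] = ∏_{i ≤ n, i odd} μ[u|_{J(i)}]` for a finite word `u` of length `n`. -/
def PmuWord (p q : ℝ) (u : List Bool) : ℝ :=
  ∏ i ∈ (Finset.Icc 1 u.length).filter (fun i => Odd i), mweight p q (subword u i)

/-- `Pm` is the (probability) measure `ℙ_μ` on `Σ₂` determined by its values
`ℙ_μ[u] = ∏_{i odd} μ[u|_{J(i)}]` on cylinder sets. -/
def IsPmu (p q : ℝ) (Pm : Measure Sigma2) : Prop :=
  IsProbabilityMeasure Pm ∧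
    ∀ u : List Bool, Pm (cylinder u) = ENNReal.ofReal (PmuWord p q u)

/-- The initial word `x_1^n = x_1 … x_n` of a sequence. -/
def word (x : Sigma2) (n : ℕ) : List Bool := (List.range n).map x

/-- `N_1(x_m^n) = #{k ∈ [m,n] : x_k = 1}`. -/
def N1 (x : Sigma2) (m n : ℕ) : ℕ :=
  ((Finset.Icc m n).filter (fun k => x (k - 1) = true)).card

/-- `N_{ij}(x_1^m) = #{k ≤ m : x_k = i, x_{2k} = j}` (digits `i, j` as booleans). -/
def Nij (x : Sigma2) (i j : Bool) (m : ℕ) : ℕ :=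
  ((Finset.Icc 1 m).filter (fun k => x (k - 1) = i ∧ x (2 * k - 1) = j)).card

/-- `N_{1,odd}(x_1^n) = #{k ≤ n : k odd, x_k = 1}`. -/
def N1odd (x : Sigma2) (n : ℕ) : ℕ :=
  ((Finset.Icc 1 n).filter (fun k => Odd k ∧ x (k - 1) = true)).card

/-- The binary entropy function `H(t) = -t log₂ t - (1-t) log₂ (1-t)`. -/
def Hent (t : ℝ) : ℝ := -(t * Real.logb 2 t) - (1 - t) * Real.logb 2 (1 - t)

open scoped Finset

namespace Nat

lemma eq_and_eq_of_two_pow_mul_odd {a b i j : ℕ} (hi : Odd i) (hj : Odd j)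
    (h : 2 ^ a * i = 2 ^ b * j) : a = b ∧ i = j := by
  have hval : ∀ {c k : ℕ}, Odd k → padicValNat 2 (2 ^ c * k) = c := fun {c k} hk => by
    rw [padicValNat.mul (by positivity) hk.pos.ne', padicValNat.prime_pow,
      padicValNat.eq_zero_of_not_dvd (by simpa [← even_iff_two_dvd] using hk), add_zero]
  obtain rfl : a = b := by rw [← hval (c := a) hi, h, hval hj]
  exact ⟨rfl, Nat.eq_of_mul_eq_mul_left (by positivity) h⟩

lemma lt_size_div_iff {n i : ℕ} (hi : 0 < i) (r : ℕ) : r < size (n / i) ↔ 2 ^ r * i ≤ n := by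
  rw [lt_size, le_div_iff_mul_le hi]

lemma card_filter_odd_Icc_one_two_mul (m : ℕ) : #{i ∈ Finset.Icc 1 (2 * m) | Odd i} = m := by
  have : {i ∈ Finset.Icc 1 (2 * m) | Odd i} = (Finset.range m).image (fun k => 2 * k + 1) := by
    ext i
    simp only [Finset.mem_filter, Finset.mem_Icc, Finset.mem_image, Finset.mem_range,
      Nat.odd_iff]
    constructor
    · rintro ⟨⟨hpos, hle⟩, hodd⟩
      exact ⟨i / 2, by omega, by omega⟩
    · rintro ⟨k, hk, rfl⟩
      omega
  rw [this, Finset.card_image_of_injective _ (fun a b h => by simpa using h), Finset.card_range]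

end Nat

lemma Finset.prod_comp_eq_prod_univ_pow_card {ι κ M : Type*} [CommMonoid M] [Fintype κ]
    [DecidableEq κ] (s : Finset ι) (g : ι → κ) (f : κ → M) :
    ∏ a ∈ s, f (g a) = ∏ b, f b ^ #{a ∈ s | g a = b} := by
  rw [← Finset.prod_fiberwise' s g f]
  simp only [Finset.prod_const]

lemma Finset.prod_odd_two_pow_mul_eq_prod_Icc {M : Type*} [CommMonoid M] (f : ℕ → M) (n : ℕ) :
    ∏ i ∈ {i ∈ Finset.Icc 1 n | Odd i}, ∏ r ∈ Finset.range (Nat.size (n / i) - 1), f (2 ^ r * i) =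
      ∏ k ∈ Finset.Icc 1 (n / 2), f k := by
  have mem_range_iff : ∀ {i r : ℕ}, 0 < i →
      (r ∈ Finset.range (Nat.size (n / i) - 1) ↔ 2 * (2 ^ r * i) ≤ n) := fun {i r} hi => by
    rw [Finset.mem_range, Nat.lt_sub_iff_add_lt, Nat.lt_size_div_iff hi, pow_succ]
    constructor <;> intro h <;> linarith
  rw [Finset.prod_sigma']
  refine Finset.prod_bij (fun a _ => 2 ^ a.2 * a.1) ?_ ?_ ?_ (fun _ _ => rfl)
  · rintro ⟨i, r⟩ h
    simp only [Finset.mem_sigma, Finset.mem_filter, Finset.mem_Icc] at h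
    have := (mem_range_iff (by omega)).1 h.2
    have : 0 < 2 ^ r * i := Nat.mul_pos (by positivity) (by omega)
    simp only [Finset.mem_Icc]
    omega
  · rintro ⟨i, r⟩ h ⟨j, s⟩ h' heq
    simp only [Finset.mem_sigma, Finset.mem_filter] at h h'
    obtain ⟨rfl, rfl⟩ := Nat.eq_and_eq_of_two_pow_mul_odd h.1.2 h'.1.2 heq
    rfl
  · intro k hk
    simp only [Finset.mem_Icc] at hk
    obtain ⟨r, i, hi, rfl⟩ := Nat.exists_eq_two_pow_mul_odd (n := k) (by omega)
    refine ⟨⟨i, r⟩, ?_, rfl⟩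
    simp only [Finset.mem_sigma, Finset.mem_filter, Finset.mem_Icc, mem_range_iff hi.pos]
    have : i ≤ 2 ^ r * i := Nat.le_mul_of_pos_left _ (by positivity)
    exact ⟨⟨⟨hi.pos, by omega⟩, hi⟩, by omega⟩

lemma List.getD_map_range {α : Type*} (f : ℕ → α) (d : α) {n j : ℕ} (h : j < n) :
    ((List.range n).map f).getD j d = f j := by
  simp [List.getD_eq_getElem?_getD, h]

lemma word_length (x : Sigma2) (n : ℕ) : (word x n).length = n := by simp [word]

lemma subword_word (x : Sigma2) (n : ℕ) {i : ℕ} (hi : 0 < i) :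
    subword (word x n) i = (List.range (Nat.size (n / i))).map fun r => x (2 ^ r * i - 1) := by
  have hsize : Nat.size (n / i) ≤ n + 1 :=
    Nat.size_le.2 ((Nat.div_le_self n i).trans_lt (Nat.lt_two_pow_self.trans
      (Nat.pow_lt_pow_succ one_lt_two)))
  have hfilter : (List.range (n + 1)).filter (fun r => 2 ^ r * i ≤ n) =
      List.range (Nat.size (n / i)) := by
    simp_rw [← Nat.lt_size_div_iff hi, ← List.Ico.zero_bot]
    exact List.Ico.filter_lt_of_ge hsize
  rw [subword, word_length, hfilter]
  refine List.map_congr_left fun r hr => List.getD_map_range _ _ ?_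
  have := (Nat.lt_size_div_iff hi r).1 (List.mem_range.1 hr)
  have : 0 < 2 ^ r * i := Nat.mul_pos (by positivity) hi
  omega

lemma mweight_map_range (p q : ℝ) (f : ℕ → Bool) (L : ℕ) :
    mweight p q ((List.range (L + 1)).map f) =
      initProb p (f 0) * ∏ r ∈ Finset.range L, transProb p q (f r) (f (r + 1)) := by
  rw [mweight, if_neg (by simp), List.getD_map_range _ _ L.succ_pos, List.length_map,
    List.length_range, Nat.add_sub_cancel]
  congr 1
  refine Finset.prod_congr rfl fun r hr => ?_
  have := Finset.mem_range.1 hr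
  rw [List.getD_map_range _ _ (by omega), List.getD_map_range _ _ (by omega)]

lemma mweight_subword_word (p q : ℝ) (x : Sigma2) {n i : ℕ} (hi : 0 < i) (hin : i ≤ n) :
    mweight p q (subword (word x n) i) = initProb p (x (i - 1)) *
      ∏ r ∈ Finset.range (Nat.size (n / i) - 1),
        transProb p q (x (2 ^ r * i - 1)) (x (2 * (2 ^ r * i) - 1)) := by
  have hsize : 0 < Nat.size (n / i) := (Nat.lt_size_div_iff hi 0).2 (by simpa using hin)
  rw [subword_word x n hi, ← Nat.sub_add_cancel hsize, mweight_map_range, Nat.add_sub_cancel]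
  simp only [pow_zero, one_mul, pow_succ, mul_comm _ 2, mul_assoc]

lemma PmuWord_word (p q : ℝ) (x : Sigma2) (n : ℕ) :
    PmuWord p q (word x n) = (∏ i ∈ {i ∈ Finset.Icc 1 n | Odd i}, initProb p (x (i - 1))) *
      ∏ k ∈ Finset.Icc 1 (n / 2), transProb p q (x (k - 1)) (x (2 * k - 1)) := by
  rw [PmuWord, word_length, ← Finset.prod_odd_two_pow_mul_eq_prod_Icc, ← Finset.prod_mul_distrib]
  refine Finset.prod_congr rfl fun i hi => ?_
  simp only [Finset.mem_filter, Finset.mem_Icc] at hi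
  exact mweight_subword_word p q x (by omega) hi.1.2

lemma prod_initProb_odd (p : ℝ) (x : Sigma2) (m : ℕ) :
    ∏ i ∈ {i ∈ Finset.Icc 1 (2 * m) | Odd i}, initProb p (x (i - 1)) =
      p ^ N1odd x (2 * m) * (1 - p) ^ (m - N1odd x (2 * m)) := by
  set S := {i ∈ Finset.Icc 1 (2 * m) | Odd i}
  have hones : #{i ∈ S | x (i - 1) = true} = N1odd x (2 * m) := by
    rw [N1odd, Finset.filter_filter]
  have hzeros : #{i ∈ S | x (i - 1) = false} = m - N1odd x (2 * m) := by
    have := Finset.card_filter_add_card_filter_not (s := S) (fun i => x (i - 1) = true)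
    simp only [Bool.not_eq_true, hones, Nat.card_filter_odd_Icc_one_two_mul, S] at this ⊢
    omega
  rw [Finset.prod_comp_eq_prod_univ_pow_card S (fun i => x (i - 1)) (initProb p),
    Fintype.prod_bool, hones, hzeros]
  simp only [initProb, if_true, Bool.false_eq_true, if_false]

lemma prod_transProb (p q : ℝ) (x : Sigma2) (m : ℕ) :
    ∏ k ∈ Finset.Icc 1 m, transProb p q (x (k - 1)) (x (2 * k - 1)) =
      (1 - p) ^ Nij x false false m * p ^ Nij x false true m *
        q ^ Nij x true false m * (1 - q) ^ Nij x true true m := by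
  rw [Finset.prod_comp_eq_prod_univ_pow_card _ (fun k => (x (k - 1), x (2 * k - 1)))
    (fun ab => transProb p q ab.1 ab.2)]
  simp only [Fintype.prod_prod_type, Fintype.prod_bool, Prod.mk.injEq, transProb, if_true,
    Bool.false_eq_true, if_false, Nij]
  ring

theorem Pmu_word_formula_general (p q : ℝ)
    (Pm : Measure Sigma2) (hPm : IsPmu p q Pm) (x : Sigma2) (n : ℕ) (hn : Even n) :
    Pm (cylinder (word x n)) = ENNReal.ofReal
      (p ^ N1odd x n * (1 - p) ^ (n / 2 - N1odd x n) *
        (1 - p) ^ Nij x false false (n / 2) * p ^ Nij x false true (n / 2) *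
        q ^ Nij x true false (n / 2) * (1 - q) ^ Nij x true true (n / 2)) := by
  obtain ⟨m, rfl⟩ := hn
  rw [← two_mul, hPm.2, PmuWord_word, prod_initProb_odd, Nat.mul_div_cancel_left m two_pos,
    prod_transProb]
  congr 1
  ring

/-- Formula (3.3): for every `x ∈ Σ₂` and even `n`,
`ℙ_μ[x_1^n] = p^{N_{1,odd}} (1-p)^{n/2 - N_{1,odd}} (1-p)^{N_00} p^{N_01} q^{N_10} (1-q)^{N_11}`,
where `N_{ij} = N_{ij}(x_1^{n/2})`. -/
theorem Pmu_word_formula (p q : ℝ) (hp : p ∈ Set.Ioo (0 : ℝ) 1) (hq : q ∈ Set.Icc (0 : ℝ) 1)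
    (Pm : Measure Sigma2) (hPm : IsPmu p q Pm) (x : Sigma2) (n : ℕ) (hn : Even n) :
    Pm (cylinder (word x n)) = ENNReal.ofReal
      (p ^ N1odd x n * (1 - p) ^ (n / 2 - N1odd x n) *
        (1 - p) ^ Nij x false false (n / 2) * p ^ Nij x false true (n / 2) *
        q ^ Nij x true false (n / 2) * (1 - q) ^ Nij x true true (n / 2)) :=
  Pmu_word_formula_general p q Pm hPm x n hn
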